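/- For the (2,2)-periodic Schrödinger symbol: with potentials c₁₁ = −c₂₂ = c₁ > 0, c₁₂ = −c₂₁ = c₂ > 0, the determinant det(S(x₁,x₂) − λI₄) equals (λ²−c₁²)(λ²−c₂²) + 2β(λ² − c₁c₂) + β² − 4λ²|τ(x₂)|², where β = |τ(x₂)|² − |τ(x₁)|² and τ(x) = 1 + e^{ix}. -/

import Mathlib

/-!
The off-diagonal blocks of `S − λ` are scalar matrices, so they commute with everything and
`det (S − λ) = det ((B₁ − λ)(B₂ − λ) − τ(x₁)τ(−x₁))`, a `2 × 2` determinant. Since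
`τ(−x) = conj τ(x)`, every product `τ(x)τ(−x)` in its expansion is `|τ(x)|²`.
-/

open Matrix

noncomputable section

/-- `τ(x) = 1 + e^{ix}`. -/
def tau (x : ℝ) : ℂ := 1 + Complex.exp (x * Complex.I)

/-- The symbol of the (2,2)-periodic discrete Schrödinger operator with potential
`c₁₁ = −c₂₂ = c₁`, `c₁₂ = −c₂₁ = c₂`. -/
def symb2 (c₁ c₂ x₁ x₂ : ℝ) : Matrix (Fin 2 ⊕ Fin 2) (Fin 2 ⊕ Fin 2) ℂ :=
  Matrix.fromBlocks
    !![(c₁ : ℂ), tau x₂; tau (-x₂), (c₂ : ℂ)]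
    (tau x₁ • (1 : Matrix (Fin 2) (Fin 2) ℂ))
    (tau (-x₁) • (1 : Matrix (Fin 2) (Fin 2) ℂ))
    !![(-c₂ : ℂ), tau x₂; tau (-x₂), (-c₁ : ℂ)]

theorem Matrix.det_fromBlocks_smul_one {R : Type*} [CommRing R] (A D : Matrix (Fin 2) (Fin 2) R)
    (a b : R) : (fromBlocks A (a • 1) (b • 1) D).det = (A * D - (a * b) • 1).det := by
  rw [← det_reindex_self finSumFinEquiv, det_succ_row_zero, det_fin_two]
  simp [Fin.sum_univ_succ, det_succ_row_zero, Fin.succAbove, mul_apply, one_apply, finSumFinEquiv,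
    Fin.addCases]
  ring

lemma tau_neg (x : ℝ) : tau (-x) = starRingEnd ℂ (tau x) := by
  simp [tau, ← Complex.exp_conj, Complex.conj_I]

lemma tau_mul_tau_neg (x : ℝ) : tau x * tau (-x) = (‖tau x‖ : ℂ) ^ 2 := by
  rw [tau_neg, Complex.mul_conj']

lemma symb2_sub_smul_one (c₁ c₂ x₁ x₂ lam : ℝ) :
    symb2 c₁ c₂ x₁ x₂ - (lam : ℂ) • 1 =
      fromBlocks !![(c₁ - lam : ℂ), tau x₂; tau (-x₂), c₂ - lam] (tau x₁ • 1) (tau (-x₁) • 1)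
        !![(-c₂ - lam : ℂ), tau x₂; tau (-x₂), -c₁ - lam] := by
  rw [symb2, ← fromBlocks_one, fromBlocks_smul, sub_eq_add_neg, fromBlocks_neg, fromBlocks_add]
  congr 1 <;> ext i j <;> fin_cases i <;> fin_cases j <;> simp [sub_eq_add_neg]

theorem det_symb2_general (c₁ c₂ : ℝ) (x₁ x₂ lam : ℝ) :
    (symb2 c₁ c₂ x₁ x₂ -
        (lam : ℂ) • (1 : Matrix (Fin 2 ⊕ Fin 2) (Fin 2 ⊕ Fin 2) ℂ)).det =
      (((lam ^ 2 - c₁ ^ 2) * (lam ^ 2 - c₂ ^ 2) +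
          2 * (‖tau x₂‖ ^ 2 - ‖tau x₁‖ ^ 2) *
            (lam ^ 2 - c₁ * c₂) +
          (‖tau x₂‖ ^ 2 - ‖tau x₁‖ ^ 2) ^ 2 -
          4 * lam ^ 2 * ‖tau x₂‖ ^ 2 : ℝ) : ℂ) := by
  rw [symb2_sub_smul_one, det_fromBlocks_smul_one, tau_mul_tau_neg, det_fin_two]
  push_cast
  rw [← tau_mul_tau_neg x₂]
  simp only [Matrix.sub_apply, Matrix.smul_apply, mul_apply, Fin.sum_univ_two, one_fin_two, of_apply,
    cons_val', cons_val_zero, cons_val_one, cons_val_fin_one]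
  ring

/-- `det(S − λI) = (λ²−c₁²)(λ²−c₂²) + 2β(λ² − c₁c₂) + β² − 4λ²|τ(x₂)|²` with
`β = |τ(x₂)|² − |τ(x₁)|²`. -/
theorem det_symb2 (c₁ c₂ : ℝ) (hc₁ : 0 < c₁) (hc₂ : 0 < c₂) (x₁ x₂ lam : ℝ) :
    (symb2 c₁ c₂ x₁ x₂ -
        (lam : ℂ) • (1 : Matrix (Fin 2 ⊕ Fin 2) (Fin 2 ⊕ Fin 2) ℂ)).det =
      (((lam ^ 2 - c₁ ^ 2) * (lam ^ 2 - c₂ ^ 2) +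
          2 * (‖tau x₂‖ ^ 2 - ‖tau x₁‖ ^ 2) *
            (lam ^ 2 - c₁ * c₂) +
          (‖tau x₂‖ ^ 2 - ‖tau x₁‖ ^ 2) ^ 2 -
          4 * lam ^ 2 * ‖tau x₂‖ ^ 2 : ℝ) : ℂ) :=
  det_symb2_general c₁ c₂ x₁ x₂ lam

end
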